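/- arXiv:1810.02722 — 2 statements merged into one kernel-verified Lean document; each statement's English description precedes it below -/
import Mathlib

section
/- Let (F_j)_{j=0}^N be a filtration on a probability space and let (Z_j)_{j=1}^N be a real-valued process adapted to (F_j) such that almost surely 0 ≤ Z_j ≤ B and E[Z_j | F_{j-1}] ≤ m for every 1 ≤ j ≤ N. Then for every λ ≥ 2Nm one has P(∑_{j=1}^N Z_j ≥ λ) ≤ exp(−3λ/(16B)). -/
/-! With `s = log 2 / B`, convexity of `exp` puts `exp (s z)` below its chord `1 + z / B` on
`[0, B]`, so `E[exp (s Z_j) | F_{j-1}] ≤ 1 + m / B ≤ exp (m / B)`. Pulling the `F_{j-1}`-measurable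
factor `exp (s (Z_1 + ⋯ + Z_{j-1}))` out of the conditional expectation and inducting gives
`E exp (s ∑ Z_j) ≤ exp (N m / B)`, and the exponential Markov inequality yields
`P(∑ Z_j ≥ λ) ≤ exp ((N m - λ log 2) / B) ≤ exp ((1/2 - log 2) λ / B)`; finally
`log 2 - 1/2 > 3/16`. -/

open MeasureTheory ProbabilityTheory

theorem Real.exp_mul_le_one_add_mul {a t : ℝ} (ht₀ : 0 ≤ t) (ht₁ : t ≤ 1) :
    Real.exp (t * a) ≤ 1 + t * (Real.exp a - 1) := by
  have h := convexOn_exp.2 (Set.mem_univ 0) (Set.mem_univ a) (sub_nonneg.2 ht₁) ht₀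
    (sub_add_cancel 1 t)
  simp only [smul_eq_mul, mul_zero, zero_add, Real.exp_zero, mul_one] at h
  linarith

section

variable {Ω : Type*} {m0 : MeasurableSpace Ω} {μ : Measure Ω}

theorem integrable_finset_prod_of_bounded [IsFiniteMeasure μ] {ι : Type*} {g : ι → Ω → ℝ}
    {C : ℝ} (s : Finset ι) (hg : ∀ i ∈ s, AEStronglyMeasurable (g i) μ)
    (hbdd : ∀ i ∈ s, ∀ᵐ ω ∂μ, ‖g i ω‖ ≤ C) :
    Integrable (fun ω ↦ ∏ i ∈ s, g i ω) μ := by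
  induction s using Finset.cons_induction with
  | empty => simp
  | cons i s hi ih =>
    simp only [Finset.prod_cons]
    have hs : ∀ j ∈ s, j ∈ Finset.cons i s hi := fun j hj ↦ Finset.mem_cons_of_mem hj
    exact (ih (fun j hj ↦ hg j (hs j hj)) fun j hj ↦ hbdd j (hs j hj)).bdd_mul
      (hg i (Finset.mem_cons_self i s)) (hbdd i (Finset.mem_cons_self i s))

theorem condExp_exp_mul_le [IsFiniteMeasure μ] {m : MeasurableSpace Ω} (hm : m ≤ m0)
    {X : Ω → ℝ} {B c s : ℝ} (hs : 0 ≤ s) (hB : 0 < B) (hX : AEStronglyMeasurable[m0] X μ)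
    (hbdd : ∀ᵐ ω ∂μ, 0 ≤ X ω ∧ X ω ≤ B) (hcond : μ[X|m] ≤ᵐ[μ] fun _ ↦ c) :
    μ[fun ω ↦ Real.exp (s * X ω)|m] ≤ᵐ[μ] fun _ ↦ Real.exp ((Real.exp (s * B) - 1) / B * c) := by
  set a := (Real.exp (s * B) - 1) / B
  have ha : 0 ≤ a := div_nonneg (by simpa using Real.one_le_exp (mul_nonneg hs hB.le)) hB.le
  have hX_int : Integrable X μ := by
    refine .of_bound hX B ?_
    filter_upwards [hbdd] with ω hω using (Real.norm_of_nonneg hω.1).trans_le hω.2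
  have hchord : ∀ᵐ ω ∂μ, Real.exp (s * X ω) ≤ a * X ω + 1 := by
    filter_upwards [hbdd] with ω hω
    have h := Real.exp_mul_le_one_add_mul (a := s * B) (div_nonneg hω.1 hB.le)
      ((div_le_one hB).2 hω.2)
    rw [show X ω / B * (s * B) = s * X ω by field_simp] at h
    linarith [div_mul_comm (X ω) B (Real.exp (s * B) - 1)]
  have hexp_int : Integrable (fun ω ↦ Real.exp (s * X ω)) μ := by
    refine .of_bound (Real.continuous_exp.comp_aestronglyMeasurable (hX.const_mul s))
      (a * B + 1) ?_
    filter_upwards [hchord, hbdd] with ω hω hω'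
    rw [Real.norm_eq_abs, abs_of_pos (Real.exp_pos _)]
    nlinarith
  have haffine := (ContinuousLinearMap.mul ℝ ℝ a).comp_condExp_add_const_comm hm hX_int 1
  filter_upwards [condExp_mono (m := m) hexp_int ((hX_int.const_mul a).add (integrable_const 1))
    hchord, haffine, hcond] with ω hmono haff hω
  simp only [ContinuousLinearMap.mul_apply'] at haff
  calc μ[fun ω ↦ Real.exp (s * X ω)|m] ω ≤ a * μ[X|m] ω + 1 := hmono.trans_eq haff.symm
    _ ≤ a * c + 1 := by gcongr
    _ ≤ Real.exp (a * c) := Real.add_one_le_exp _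

theorem integral_prod_Icc_le_pow [IsZeroOrProbabilityMeasure μ] (F : Filtration ℕ m0)
    {g : ℕ → Ω → ℝ} {C c : ℝ} (hc : 0 ≤ c)
    (n : ℕ) (hadp : ∀ j ∈ Finset.Icc 1 n, StronglyMeasurable[F j] (g j))
    (hbdd : ∀ j ∈ Finset.Icc 1 n, ∀ᵐ ω ∂μ, 0 ≤ g j ω ∧ g j ω ≤ C)
    (hcond : ∀ j ∈ Finset.Icc 1 n, μ[g j|F (j - 1)] ≤ᵐ[μ] fun _ ↦ c) :
    ∫ ω, ∏ j ∈ Finset.Icc 1 n, g j ω ∂μ ≤ c ^ n := by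
  induction n with
  | zero => simp
  | succ n ih =>
    have hsub : Finset.Icc 1 n ⊆ Finset.Icc 1 (n + 1) := Finset.Icc_subset_Icc_right n.le_succ
    have hlast : n + 1 ∈ Finset.Icc 1 (n + 1) := by simp
    have hmeas : ∀ j ∈ Finset.Icc 1 (n + 1), AEStronglyMeasurable (g j) μ :=
      fun j hj ↦ ((hadp j hj).mono (F.le j)).aestronglyMeasurable
    have hnorm : ∀ j ∈ Finset.Icc 1 (n + 1), ∀ᵐ ω ∂μ, ‖g j ω‖ ≤ C := fun j hj ↦ by
      filter_upwards [hbdd j hj] with ω hω using (Real.norm_of_nonneg hω.1).trans_le hω.2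
    set f := fun ω ↦ ∏ j ∈ Finset.Icc 1 n, g j ω
    have hf_meas : StronglyMeasurable[F n] f :=
      Finset.stronglyMeasurable_fun_prod _ fun j hj ↦
        (hadp j (hsub hj)).mono (F.mono (Finset.mem_Icc.1 hj).2)
    have hf_nonneg : ∀ᵐ ω ∂μ, 0 ≤ f ω := by
      filter_upwards [(ae_ball_iff (Finset.Icc 1 n).countable_toSet).2
        fun j hj ↦ hbdd j (hsub hj)] with ω hω
      exact Finset.prod_nonneg fun j hj ↦ (hω j hj).1
    have hf_int : Integrable f μ := integrable_finset_prod_of_bounded _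
      (fun j hj ↦ hmeas j (hsub hj)) fun j hj ↦ hnorm j (hsub hj)
    have hg_int : Integrable (g (n + 1)) μ := .of_bound (hmeas _ hlast) C (hnorm _ hlast)
    have hsplit : (fun ω ↦ ∏ j ∈ Finset.Icc 1 (n + 1), g j ω) = f * g (n + 1) := by
      ext ω
      exact Finset.prod_Icc_succ_top (by omega) _
    have hfg_int : Integrable (f * g (n + 1)) μ :=
      hsplit ▸ integrable_finset_prod_of_bounded _ hmeas hnorm
    calc ∫ ω, ∏ j ∈ Finset.Icc 1 (n + 1), g j ω ∂μ = ∫ ω, μ[f * g (n + 1)|F n] ω ∂μ := by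
          rw [hsplit, integral_condExp (F.le n)]
      _ ≤ ∫ ω, f ω * c ∂μ := by
          refine integral_mono_ae integrable_condExp (hf_int.mul_const c) ?_
          filter_upwards [condExp_mul_of_stronglyMeasurable_left hf_meas hfg_int hg_int,
            hcond (n + 1) hlast, hf_nonneg] with ω hpull hω hf
          rw [hpull]
          exact mul_le_mul_of_nonneg_left hω hf
      _ = (∫ ω, f ω ∂μ) * c := integral_mul_const c f
      _ ≤ c ^ n * c := by
          gcongr
          exact ih (fun j hj ↦ hadp j (hsub hj)) (fun j hj ↦ hbdd j (hsub hj))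
            fun j hj ↦ hcond j (hsub hj)
      _ = c ^ (n + 1) := (pow_succ c n).symm

theorem measureReal_sum_Icc_ge_le [IsProbabilityMeasure μ] (F : Filtration ℕ m0) {N : ℕ}
    {Z : ℕ → Ω → ℝ} {B c s : ℝ} (lam : ℝ) (hs : 0 ≤ s) (hB : 0 < B)
    (hadp : ∀ j ∈ Finset.Icc 1 N, Measurable[F j] (Z j))
    (hbdd : ∀ j ∈ Finset.Icc 1 N, ∀ᵐ ω ∂μ, 0 ≤ Z j ω ∧ Z j ω ≤ B)
    (hcond : ∀ j ∈ Finset.Icc 1 N, μ[Z j|F (j - 1)] ≤ᵐ[μ] fun _ ↦ c) :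
    μ.real {ω | lam ≤ ∑ j ∈ Finset.Icc 1 N, Z j ω} ≤
      Real.exp (-s * lam) * Real.exp ((Real.exp (s * B) - 1) / B * c) ^ N := by
  have hexp : ∀ ω, Real.exp (s * ∑ j ∈ Finset.Icc 1 N, Z j ω) =
      ∏ j ∈ Finset.Icc 1 N, Real.exp (s * Z j ω) := fun ω ↦ by
    rw [Finset.mul_sum, Real.exp_sum]
  have hmeas : ∀ j ∈ Finset.Icc 1 N, StronglyMeasurable[F j] fun ω ↦ Real.exp (s * Z j ω) :=
    fun j hj ↦ ((hadp j hj).const_mul s).exp.stronglyMeasurable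
  have hbdd_exp : ∀ j ∈ Finset.Icc 1 N, ∀ᵐ ω ∂μ,
      0 ≤ Real.exp (s * Z j ω) ∧ Real.exp (s * Z j ω) ≤ Real.exp (s * B) := fun j hj ↦ by
    filter_upwards [hbdd j hj] with ω hω
    exact ⟨(Real.exp_pos _).le, Real.exp_le_exp.2 (mul_le_mul_of_nonneg_left hω.2 hs)⟩
  have hint : Integrable (fun ω ↦ Real.exp (s * ∑ j ∈ Finset.Icc 1 N, Z j ω)) μ := by
    simp_rw [hexp]
    refine integrable_finset_prod_of_bounded (C := Real.exp (s * B)) _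
      (fun j hj ↦ ((hmeas j hj).mono (F.le j)).aestronglyMeasurable) fun j hj ↦ ?_
    filter_upwards [hbdd_exp j hj] with ω hω using (Real.norm_of_nonneg hω.1).trans_le hω.2
  have hmgf : mgf (fun ω ↦ ∑ j ∈ Finset.Icc 1 N, Z j ω) μ s ≤
      Real.exp ((Real.exp (s * B) - 1) / B * c) ^ N := by
    simp_rw [mgf, hexp]
    refine integral_prod_Icc_le_pow F (Real.exp_pos _).le N hmeas hbdd_exp fun j hj ↦ ?_
    exact condExp_exp_mul_le (F.le _) hs hB
      ((hadp j hj).mono (F.le j) le_rfl).aestronglyMeasurable (hbdd j hj) (hcond j hj)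
  calc μ.real {ω | lam ≤ ∑ j ∈ Finset.Icc 1 N, Z j ω}
      ≤ Real.exp (-s * lam) * mgf (fun ω ↦ ∑ j ∈ Finset.Icc 1 N, Z j ω) μ s :=
        measure_ge_le_exp_mul_mgf lam hs hint
    _ ≤ _ := by gcongr

end

/-- **Bernstein corollary (Corollary 1.2).**  If `(Z_j)_{j=1}^N` is adapted to the
filtration `(F_j)`, `0 ≤ Z_j ≤ B` a.s., and `E[Z_j | F_{j-1}] ≤ m` a.s. for every
`1 ≤ j ≤ N`, then for every `λ ≥ 2 N m`,
`P(∑_{j=1}^N Z_j ≥ λ) ≤ exp (−3λ / (16 B))`. -/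
theorem bernstein_corollary {Ω : Type*} {m0 : MeasurableSpace Ω} (μ : Measure Ω)
    [IsProbabilityMeasure μ] (F : Filtration ℕ m0) (N : ℕ) (Z : ℕ → Ω → ℝ) (B m lam : ℝ)
    (hadp : ∀ j, 1 ≤ j → j ≤ N → Measurable[F j] (Z j))
    (hbdd : ∀ j, 1 ≤ j → j ≤ N → ∀ᵐ ω ∂μ, 0 ≤ Z j ω ∧ Z j ω ≤ B)
    (hcond : ∀ j, 1 ≤ j → j ≤ N → ∀ᵐ ω ∂μ, condExp (F (j - 1)) μ (Z j) ω ≤ m)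
    (hlam : 2 * N * m ≤ lam) :
    μ {ω | lam ≤ ∑ j ∈ Finset.Icc 1 N, Z j ω} ≤
      ENNReal.ofReal (Real.exp (-(3 * lam) / (16 * B))) := by
  by_cases htriv : 0 ≤ -(3 * lam) / (16 * B)
  · exact prob_le_one.trans (by simpa using Real.one_le_exp htriv)
  have hB : 0 < B := by
    rcases div_neg_iff.1 (not_le.1 htriv) with ⟨hneg, hB⟩ | ⟨_, hB⟩
    · have hN : N ≠ 0 := by
        rintro rfl
        norm_num at hlam
        linarith
      obtain ⟨ω, hω⟩ := (hbdd 1 le_rfl (Nat.pos_of_ne_zero hN)).exists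
      linarith [hω.1, hω.2]
    · linarith
  have hlam_pos : 0 < lam := by
    by_contra! h
    exact htriv (div_nonneg (by linarith) (by linarith))
  simp only [← and_imp, ← Finset.mem_Icc] at hadp hbdd hcond
  have key := measureReal_sum_Icc_ge_le F lam (s := Real.log 2 / B) (by positivity) hB
    hadp hbdd hcond
  rw [div_mul_cancel₀ _ hB.ne', Real.exp_log two_pos, ← Real.exp_nat_mul, ← Real.exp_add] at key
  rw [← ENNReal.ofReal_toReal (measure_ne_top μ _), ← measureReal_def]
  refine ENNReal.ofReal_le_ofReal (key.trans (Real.exp_le_exp.2 ?_))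
  have hlog2 := Real.log_two_gt_d9
  rw [← sub_nonneg]
  field_simp
  nlinarith
end

section
/- Let G be a k-regular graph on n vertices whose adjacency matrix A has all non-principal eigenvalues bounded in absolute value by some λ̃ < k. For t ≥ 1 let A^{(t)}_{u,v} be the number of non-backtracking walks of length t from u to v in G and set P̃^{(t)} = A^{(t)}/(k(k−1)^{t−1}). Let ψ(x) = 1 for 0 ≤ x ≤ 1 and ψ(x) = x + √(x² − 1) for x ≥ 1, and set β = ψ(λ̃/(2√(k−1)))/√(k−1), so that β < 1. Then for every t ≥ 2, max over vertices u, v of |P̃^{(t)}_{u,v} − 1/n| ≤ ((k−1)/k)(t+1)β^t + (1/(k(k−1)))(t−1)β^{t−2}. -/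
noncomputable section

/-- `G` is `k`-regular. -/
def kRegular {V : Type} (G : SimpleGraph V) (k : ℕ) : Prop :=
  ∀ v, (G.neighborSet v).ncard = k

open scoped Classical in
/-- The (real) adjacency matrix of a simple graph. -/
def adjMat {V : Type} (G : SimpleGraph V) : Matrix V V ℝ :=
  Matrix.of fun u v => if G.Adj u v then 1 else 0

/-- The number of non-backtracking walks of length `t` from `u` to `v` in `G`. -/
def nbWalkCount {V : Type} (G : SimpleGraph V) (t : ℕ) (u v : V) : ℕ :=
  Nat.card {p : Fin (t + 1) → V //
    p 0 = u ∧ p (Fin.last t) = v ∧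
    (∀ s : ℕ, (h : s + 1 ≤ t) → G.Adj (p ⟨s, by omega⟩) (p ⟨s + 1, by omega⟩)) ∧
    (∀ s : ℕ, (h : s + 2 ≤ t) → p ⟨s + 2, by omega⟩ ≠ p ⟨s, by omega⟩)}

/-- `ψ(x) = 1` for `x ≤ 1` and `ψ(x) = x + √(x² − 1)` for `x ≥ 1`. -/
def psi (x : ℝ) : ℝ := if x ≤ 1 then 1 else x + Real.sqrt (x ^ 2 - 1)

/-!
Counting non-backtracking walks by their second vertex gives
`A⁽ᵗ⁺¹⁾ = A A⁽ᵗ⁾ − (k − 1) A⁽ᵗ⁻¹⁾` for `t ≥ 2`, so `A⁽ᵗ⁾ = p_t(A)` for polynomials `p_t`, and the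
spectral theorem writes `A⁽ᵗ⁾ u v = ∑ᵢ p_t(λᵢ) φᵢ(u) φᵢ(v)` over an orthonormal eigenbasis `φ`.
Since `k` is a simple eigenvalue with the all-ones eigenvector, `φ_{i₀}` is constant and the
principal term is `p_t(k) / n = k (k − 1)^{t−1} / n`; the other terms add up to at most
`max_{i ≠ i₀} |p_t(λᵢ)|` because the rows of `(φᵢ(u))` are unit vectors.
To bound `p_t(x)`, write `x = a + b` with `ab = k − 1`: then `p_t(x) = h_t(a, b) − h_{t−2}(a, b)`
for the complete homogeneous sums `h_n(a, b) = ∑ aⁱ bⁿ⁻ⁱ` (rescaled Chebyshev polynomials of the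
second kind), and `a, b` can be taken of modulus at most `√(k − 1) ψ(|x| / (2√(k − 1)))`.
-/

open Finset Polynomial

section AdjMat

variable {V : Type} {G : SimpleGraph V}

theorem adjMat_eq_adjMatrix [DecidableRel G.Adj] : adjMat G = G.adjMatrix ℝ := by
  ext u v
  simp [adjMat, SimpleGraph.adjMatrix_apply]

theorem kRegular.isRegularOfDegree [Fintype V] [DecidableRel G.Adj] {k : ℕ}
    (h : kRegular G k) : G.IsRegularOfDegree k := fun v => by
  rw [← h v, ← SimpleGraph.card_neighborFinset_eq_degree, SimpleGraph.neighborFinset,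
    Set.ncard_eq_toFinset_card']

theorem sum_adjMat_apply [Fintype V] {k : ℕ} (h : kRegular G k) (u : V) :
    ∑ w, adjMat G u w = k := by
  classical
  simpa [adjMat_eq_adjMatrix, Matrix.mulVec, dotProduct] using
    SimpleGraph.adjMatrix_mulVec_const_apply_of_regular (α := ℝ) (a := 1) h.isRegularOfDegree
      (v := u)

end AdjMat

namespace Matrix.IsHermitian

variable {ι : Type*} [Fintype ι] [DecidableEq ι] {A : Matrix ι ι ℝ} (hA : A.IsHermitian)
include hA

theorem aeval_apply_eq_sum (p : ℝ[X]) (u v : ι) :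
    aeval A p u v =
      ∑ i, p.eval (hA.eigenvalues i) * hA.eigenvectorBasis i u * hA.eigenvectorBasis i v := by
  rw [← cfc_polynomial p A hA.isSelfAdjoint, hA.cfc_eq, IsHermitian.cfc,
    Unitary.conjStarAlgAut_apply]
  simp [Matrix.mul_apply, Matrix.diagonal_apply, mul_comm]

theorem sum_eigenvectorBasis_apply_mul_apply (u v : ι) :
    ∑ i, hA.eigenvectorBasis i u * hA.eigenvectorBasis i v = if u = v then 1 else 0 := by
  simpa [Matrix.one_apply] using (aeval_apply_eq_sum hA 1 u v).symm

theorem sum_abs_eigenvectorBasis_apply_mul_apply_le_one (u v : ι) :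
    ∑ i, |hA.eigenvectorBasis i u * hA.eigenvectorBasis i v| ≤ 1 := by
  have hu := sum_eigenvectorBasis_apply_mul_apply hA u u
  have hv := sum_eigenvectorBasis_apply_mul_apply hA v v
  simp only [if_true] at hu hv
  calc ∑ i, |hA.eigenvectorBasis i u * hA.eigenvectorBasis i v|
      ≤ ∑ i, (hA.eigenvectorBasis i u * hA.eigenvectorBasis i u +
          hA.eigenvectorBasis i v * hA.eigenvectorBasis i v) / 2 := by
        refine sum_le_sum fun i _ => ?_
        rw [abs_mul]
        nlinarith [sq_abs (hA.eigenvectorBasis i u), sq_abs (hA.eigenvectorBasis i v),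
          sq_nonneg (|hA.eigenvectorBasis i u| - |hA.eigenvectorBasis i v|)]
    _ = 1 := by rw [← sum_div, sum_add_distrib, hu, hv]; norm_num

variable {k : ℝ} (hrow : ∀ u, ∑ w, A u w = k) {i₀ : ι}
  (hsimple : ∀ i ≠ i₀, hA.eigenvalues i ≠ k)
include hrow hsimple

theorem sum_eigenvectorBasis_apply_eq_zero {i : ι} (hi : i ≠ i₀) :
    ∑ w, hA.eigenvectorBasis i w = 0 := by
  have hcol (x : ι) : ∑ w, A w x = k := by
    simpa [← hA.apply x] using hrow x
  have heig : hA.eigenvalues i * ∑ w, hA.eigenvectorBasis i w = k * ∑ w, hA.eigenvectorBasis i w :=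
    calc hA.eigenvalues i * ∑ w, hA.eigenvectorBasis i w
        = ∑ w, ∑ x, A w x * hA.eigenvectorBasis i x := by
          rw [mul_sum]
          refine sum_congr rfl fun w _ => ?_
          simpa [Matrix.mulVec, dotProduct] using (congrFun (hA.mulVec_eigenvectorBasis i) w).symm
      _ = k * ∑ w, hA.eigenvectorBasis i w := by
          rw [sum_comm, mul_sum]
          simp only [← sum_mul, hcol]
  exact (mul_eq_mul_right_iff.1 heig).resolve_left (hsimple i hi)

theorem eigenvectorBasis_apply_mul_apply_eq_one_div_card (u v : ι) :
    hA.eigenvectorBasis i₀ u * hA.eigenvectorBasis i₀ v = 1 / Fintype.card ι := by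
  set c := ∑ w, hA.eigenvectorBasis i₀ w
  -- the all-ones vector is `c • hA.eigenvectorBasis i₀`, being orthogonal to the other eigenvectors
  have hconst (u : ι) : hA.eigenvectorBasis i₀ u * c = 1 :=
    calc hA.eigenvectorBasis i₀ u * c
        = ∑ i, hA.eigenvectorBasis i u * ∑ w, hA.eigenvectorBasis i w := by
          rw [sum_eq_single_of_mem i₀ (mem_univ i₀) fun i _ hi => by
            rw [sum_eigenvectorBasis_apply_eq_zero hA hrow hsimple hi, mul_zero]]
      _ = 1 := by
          simp only [mul_sum]
          rw [sum_comm]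
          simp [sum_eigenvectorBasis_apply_mul_apply]
  have hcard : c * c = Fintype.card ι :=
    calc c * c = ∑ u, hA.eigenvectorBasis i₀ u * c := sum_mul _ _ _
      _ = Fintype.card ι := by simp [hconst]
  have hc : c ≠ 0 := right_ne_zero_of_mul_eq_one (hconst u)
  rw [← hcard, eq_div_iff (mul_ne_zero hc hc)]
  linear_combination (hA.eigenvectorBasis i₀ v * c) * hconst u + hconst v

theorem abs_aeval_apply_sub_eval_div_card_le (hi₀ : hA.eigenvalues i₀ = k) (p : ℝ[X]) {B : ℝ}
    (hB₀ : 0 ≤ B) (hB : ∀ i ≠ i₀, |p.eval (hA.eigenvalues i)| ≤ B) (u v : ι) :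
    |aeval A p u v - p.eval k / Fintype.card ι| ≤ B := by
  rw [aeval_apply_eq_sum hA, ← add_sum_erase _ _ (mem_univ i₀), mul_assoc,
    eigenvectorBasis_apply_mul_apply_eq_one_div_card hA hrow hsimple, hi₀, mul_one_div,
    add_sub_cancel_left]
  calc |∑ i ∈ univ.erase i₀,
        p.eval (hA.eigenvalues i) * hA.eigenvectorBasis i u * hA.eigenvectorBasis i v|
      ≤ ∑ i ∈ univ.erase i₀, B * |hA.eigenvectorBasis i u * hA.eigenvectorBasis i v| := by
        refine (abs_sum_le_sum_abs _ _).trans (sum_le_sum fun i hi => ?_)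
        rw [mul_assoc, abs_mul]
        exact mul_le_mul_of_nonneg_right (hB i (ne_of_mem_erase hi)) (abs_nonneg _)
    _ ≤ B * ∑ i, |hA.eigenvectorBasis i u * hA.eigenvectorBasis i v| := by
        rw [← mul_sum]
        exact mul_le_mul_of_nonneg_left
          (sum_le_sum_of_subset_of_nonneg (erase_subset _ _) fun _ _ _ => abs_nonneg _) hB₀
    _ ≤ B := mul_le_of_le_one_right hB₀ (sum_abs_eigenvectorBasis_apply_mul_apply_le_one hA u v)

end Matrix.IsHermitian

namespace NonBacktracking

variable {V : Type}

section Walks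

variable (G : SimpleGraph V)

def IsNBWalk (t : ℕ) (p : Fin (t + 1) → V) : Prop :=
  (∀ s : ℕ, (h : s + 1 ≤ t) → G.Adj (p ⟨s, by omega⟩) (p ⟨s + 1, by omega⟩)) ∧
    (∀ s : ℕ, (h : s + 2 ≤ t) → p ⟨s + 2, by omega⟩ ≠ p ⟨s, by omega⟩)

variable {G}

theorem isNBWalk_cons {t : ℕ} {a : V} {q : Fin (t + 2) → V} :
    IsNBWalk G (t + 2) (Fin.cons a q) ↔ G.Adj a (q 0) ∧ q 1 ≠ a ∧ IsNBWalk G (t + 1) q := by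
  constructor
  · rintro ⟨hadj, hnb⟩
    have ha := hadj 0 (by omega)
    have hq := hnb 0 (by omega)
    exact ⟨ha, hq, fun s _ => hadj (s + 1) (by omega), fun s _ => hnb (s + 1) (by omega)⟩
  · rintro ⟨ha, hq, hadj, hnb⟩
    refine ⟨fun s hs => ?_, fun s hs => ?_⟩
    · cases s with
      | zero => exact ha
      | succ s => exact hadj s (by omega)
    · cases s with
      | zero => exact hq
      | succ s => exact hnb s (by omega)

theorem IsNBWalk.adj_zero_one {t : ℕ} {p : Fin (t + 2) → V} (hp : IsNBWalk G (t + 1) p) :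
    G.Adj (p 0) (p 1) :=
  hp.1 0 (by omega)

variable [Fintype V]

variable (G) in
open scoped Classical in
def nbWalks (t : ℕ) (u v : V) : Finset (Fin (t + 1) → V) :=
  {p | p 0 = u ∧ p (Fin.last t) = v ∧ IsNBWalk G t p}

theorem mem_nbWalks {t : ℕ} {u v : V} {p : Fin (t + 1) → V} :
    p ∈ nbWalks G t u v ↔ p 0 = u ∧ p (Fin.last t) = v ∧ IsNBWalk G t p := by
  simp [nbWalks]

theorem nbWalkCount_eq_card (t : ℕ) (u v : V) : nbWalkCount G t u v = #(nbWalks G t u v) := by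
  classical
  rw [nbWalkCount, Nat.card_eq_fintype_card, ← Fintype.card_coe]
  exact Fintype.card_congr (Equiv.subtypeEquivRight fun _ => mem_nbWalks.symm)

variable [DecidableRel G.Adj]

theorem card_nbWalks_one (u v : V) :
    #(nbWalks G 1 u v) = if G.Adj u v then 1 else 0 := by
  have hwalks : nbWalks G 1 u v = if G.Adj u v then {![u, v]} else ∅ := by
    ext p
    rw [mem_nbWalks]
    split_ifs with h
    · rw [mem_singleton]
      constructor
      · rintro ⟨h0, h1, -⟩
        ext i
        fin_cases i
        exacts [h0, h1]
      · rintro rfl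
        refine ⟨rfl, rfl, fun s hs => ?_, fun s hs => absurd hs (by omega)⟩
        obtain rfl : s = 0 := by omega
        exact h
    · simp only [notMem_empty, iff_false]
      rintro ⟨h0, h1, hp⟩
      exact h (h0 ▸ h1 ▸ hp.adj_zero_one)
  split_ifs at hwalks ⊢ <;> simp [hwalks]

variable [DecidableEq V]

theorem card_filter_nbWalks_apply_one_eq (m : ℕ) (u v w : V) :
    #{p ∈ nbWalks G (m + 2) u v | p 1 = w} =
      if G.Adj u w then #{q ∈ nbWalks G (m + 1) w v | q 1 ≠ u} else 0 := by
  split_ifs with h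
  · refine card_bij' (fun p _ => Fin.tail p) (fun q _ => Fin.cons u q) ?_ ?_ ?_ ?_
    · intro p hp
      simp only [mem_filter, mem_nbWalks] at hp ⊢
      obtain ⟨⟨h0, hl, hp⟩, h1⟩ := hp
      rw [← Fin.cons_self_tail p, isNBWalk_cons, h0] at hp
      exact ⟨⟨h1, hl, hp.2.2⟩, hp.2.1⟩
    · intro q hq
      simp only [mem_filter, mem_nbWalks] at hq ⊢
      obtain ⟨⟨h0, hl, hq⟩, h1⟩ := hq
      exact ⟨⟨rfl, hl, isNBWalk_cons.2 ⟨h0 ▸ h, h1, hq⟩⟩, h0⟩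
    · intro p hp
      simp only [mem_filter, mem_nbWalks] at hp
      rw [← hp.1.1, Fin.cons_self_tail]
    · intro q _
      exact Fin.tail_cons _ _
  · rw [card_eq_zero, filter_eq_empty_iff]
    rintro p hp rfl
    obtain ⟨h0, -, hp⟩ := mem_nbWalks.1 hp
    exact h (h0 ▸ hp.adj_zero_one)

theorem card_nbWalks_add_two (m : ℕ) (u v : V) :
    #(nbWalks G (m + 2) u v) =
      ∑ w ∈ G.neighborFinset u, #{q ∈ nbWalks G (m + 1) w v | q 1 ≠ u} := by
  rw [card_eq_sum_card_fiberwise (f := fun p => p 1) (t := univ) fun _ _ => mem_univ _,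
    SimpleGraph.neighborFinset_eq_filter, sum_filter]
  exact sum_congr rfl fun w _ => card_filter_nbWalks_apply_one_eq m u v w

theorem sum_card_filter_nbWalks_apply_one_ne_add_card {k : ℕ} (hreg : G.IsRegularOfDegree k)
    (m : ℕ) (u v : V) :
    ∑ w ∈ G.neighborFinset u, #{q ∈ nbWalks G (m + 1) u v | q 1 ≠ w} + #(nbWalks G (m + 1) u v) =
      k * #(nbWalks G (m + 1) u v) := by
  simp_rw [card_filter]
  rw [sum_comm, card_eq_sum_ones, ← sum_add_distrib, mul_sum]
  refine sum_congr rfl fun q hq => ?_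
  obtain ⟨h0, -, hq⟩ := mem_nbWalks.1 hq
  have hmem : q 1 ∈ G.neighborFinset u := by
    rw [SimpleGraph.mem_neighborFinset, ← h0]
    exact hq.adj_zero_one
  rw [← card_filter, filter_ne, card_erase_add_one hmem, SimpleGraph.card_neighborFinset_eq_degree,
    hreg.degree_eq, mul_one]

theorem card_nbWalks_add_three {k : ℕ} (hreg : G.IsRegularOfDegree k)
    (m : ℕ) (u v : V) :
    #(nbWalks G (m + 3) u v) + k * #(nbWalks G (m + 1) u v) =
      ∑ w ∈ G.neighborFinset u, #(nbWalks G (m + 2) w v) + #(nbWalks G (m + 1) u v) := by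
  rw [← sum_card_filter_nbWalks_apply_one_ne_add_card hreg, card_nbWalks_add_two (m + 1),
    ← add_assoc, ← sum_add_distrib]
  congr 1
  refine sum_congr rfl fun w hw => ?_
  have hwu : G.Adj w u := (G.mem_neighborFinset u w).1 hw |>.symm
  have hfiber := card_filter_nbWalks_apply_one_eq (G := G) m w v u
  rw [if_pos hwu] at hfiber
  rw [← hfiber, add_comm]
  exact card_filter_add_card_filter_not _

end Walks

section WalkMatrix

variable [Fintype V] {G : SimpleGraph V} [DecidableRel G.Adj]

variable (G) in
def nbWalkMatrix (t : ℕ) : Matrix V V ℝ := Matrix.of fun u v => (nbWalkCount G t u v : ℝ)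

theorem nbWalkMatrix_one : nbWalkMatrix G 1 = G.adjMatrix ℝ := by
  ext u v
  simp [nbWalkMatrix, nbWalkCount_eq_card, card_nbWalks_one, SimpleGraph.adjMatrix_apply]

variable [DecidableEq V]

theorem nbWalkMatrix_two {k : ℕ} (hreg : G.IsRegularOfDegree k) :
    nbWalkMatrix G 2 = G.adjMatrix ℝ ^ 2 - (k : ℝ) • 1 := by
  ext u v
  rw [nbWalkMatrix, Matrix.of_apply, nbWalkCount_eq_card, card_nbWalks_add_two 0, Matrix.sub_apply,
    Matrix.smul_apply, sq]
  have hsnd (w : V) : {q ∈ nbWalks G 1 w v | q 1 ≠ u} = if v = u then ∅ else nbWalks G 1 w v := by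
    split_ifs with h
    · exact filter_false_of_mem fun q hq => not_not.2 ((mem_nbWalks.1 hq).2.1.trans h)
    · exact filter_true_of_mem fun q hq => (mem_nbWalks.1 hq).2.1 ▸ h
  simp_rw [hsnd]
  by_cases huv : u = v
  · subst huv
    rw [SimpleGraph.adjMatrix_mul_self_apply_self, hreg.degree_eq]
    simp
  · rw [SimpleGraph.adjMatrix_mul_apply]
    simp [Ne.symm huv, huv, card_nbWalks_one]

theorem nbWalkMatrix_add_three {k : ℕ} (hreg : G.IsRegularOfDegree k) (m : ℕ) :
    nbWalkMatrix G (m + 3) =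
      G.adjMatrix ℝ * nbWalkMatrix G (m + 2) - ((k : ℝ) - 1) • nbWalkMatrix G (m + 1) := by
  ext u v
  have hrec := congrArg (Nat.cast : ℕ → ℝ) (card_nbWalks_add_three hreg m u v)
  push_cast at hrec
  simp only [nbWalkMatrix, Matrix.sub_apply, Matrix.smul_apply, SimpleGraph.adjMatrix_mul_apply,
    Matrix.of_apply, nbWalkCount_eq_card, smul_eq_mul]
  linarith

end WalkMatrix

def nbPoly (k : ℝ) : ℕ → ℝ[X]
  | 0 => 1
  | 1 => X
  | 2 => X ^ 2 - C k
  | n + 3 => X * nbPoly k (n + 2) - C (k - 1) * nbPoly k (n + 1)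

theorem nbWalkMatrix_eq_aeval [Fintype V] [DecidableEq V] {G : SimpleGraph V} [DecidableRel G.Adj]
    {k : ℕ} (hreg : G.IsRegularOfDegree k) :
    ∀ t, nbWalkMatrix G (t + 1) = aeval (G.adjMatrix ℝ) (nbPoly k (t + 1))
  | 0 => by simp [nbPoly, nbWalkMatrix_one]
  | 1 => by
    rw [nbWalkMatrix_two hreg, nbPoly, map_sub, map_pow, aeval_X, aeval_C,
      Algebra.algebraMap_eq_smul_one]
  | t + 2 => by
    rw [nbWalkMatrix_add_three hreg, nbWalkMatrix_eq_aeval hreg (t + 1),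
      nbWalkMatrix_eq_aeval hreg t, nbPoly, map_sub, map_mul, map_mul, aeval_X, aeval_C,
      Algebra.smul_def]

theorem eval_nbPoly_self (k : ℝ) : ∀ t, (nbPoly k (t + 1)).eval k = k * (k - 1) ^ t
  | 0 => by simp [nbPoly]
  | 1 => by
    simp only [nbPoly, eval_sub, eval_pow, eval_X, eval_C]
    ring
  | t + 2 => by
    rw [nbPoly, eval_sub, eval_mul, eval_mul, eval_X, eval_C, eval_nbPoly_self k (t + 1),
      eval_nbPoly_self k t]
    ring

section CompleteHom

variable {R : Type*} [CommRing R] (a b : R)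

def completeHom (n : ℕ) : R :=
  ∑ i ∈ range (n + 1), a ^ i * b ^ (n - i)

theorem completeHom_zero : completeHom a b 0 = 1 := by
  simp [completeHom]

theorem completeHom_succ (n : ℕ) :
    completeHom a b (n + 1) = a ^ (n + 1) + b * completeHom a b n := by
  rw [completeHom, geom_sum₂_succ_eq]
  rfl

theorem completeHom_one : completeHom a b 1 = a + b := by
  rw [completeHom_succ, completeHom_zero, pow_one, mul_one]

theorem completeHom_add_two (n : ℕ) :
    completeHom a b (n + 2) = (a + b) * completeHom a b (n + 1) - a * b * completeHom a b n := by
  rw [completeHom_succ a b (n + 1), completeHom_succ a b n]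
  ring

end CompleteHom

theorem norm_completeHom_le {𝕜 : Type*} [NormedField 𝕜] {a b : 𝕜} {ρ : ℝ} (ha : ‖a‖ ≤ ρ)
    (hb : ‖b‖ ≤ ρ) (n : ℕ) : ‖completeHom a b n‖ ≤ (n + 1) * ρ ^ n := by
  have hρ : 0 ≤ ρ := (norm_nonneg a).trans ha
  calc ‖completeHom a b n‖ ≤ ∑ i ∈ range (n + 1), ‖a ^ i * b ^ (n - i)‖ := norm_sum_le _ _
    _ ≤ ∑ i ∈ range (n + 1), ρ ^ n := sum_le_sum fun i hi =>
        calc ‖a ^ i * b ^ (n - i)‖ = ‖a‖ ^ i * ‖b‖ ^ (n - i) := by rw [norm_mul, norm_pow, norm_pow]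
          _ ≤ ρ ^ i * ρ ^ (n - i) := by gcongr
          _ = ρ ^ n := by rw [← pow_add, Nat.add_sub_cancel' (mem_range_succ_iff.1 hi)]
    _ = (n + 1) * ρ ^ n := by rw [sum_const, card_range, nsmul_eq_mul]; push_cast; ring

theorem eval_nbPoly_eq_completeHom (k x : ℝ) {a b : ℂ} (hadd : a + b = x) (hmul : a * b = k - 1) :
    ∀ m, (((nbPoly k (m + 2)).eval x : ℝ) : ℂ) = completeHom a b (m + 2) - completeHom a b m
  | 0 => by
    rw [completeHom_add_two, completeHom_one, completeHom_zero, hadd, hmul]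
    simp only [nbPoly, eval_sub, eval_pow, eval_X, eval_C]
    push_cast
    ring
  | 1 => by
    rw [completeHom_add_two a b 1, completeHom_add_two a b 0, completeHom_one, completeHom_zero,
      hadd, hmul]
    simp only [nbPoly, eval_sub, eval_mul, eval_pow, eval_X, eval_C]
    push_cast
    ring
  | m + 2 => by
    rw [nbPoly]
    push_cast [eval_sub, eval_mul, eval_X, eval_C]
    rw [eval_nbPoly_eq_completeHom k x hadd hmul (m + 1),
      eval_nbPoly_eq_completeHom k x hadd hmul m, completeHom_add_two a b (m + 2),
      completeHom_add_two a b m, hadd, hmul]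
    ring

theorem one_le_psi (x : ℝ) : 1 ≤ psi x := by
  unfold psi
  split_ifs
  · exact le_rfl
  · linarith [Real.sqrt_nonneg (x ^ 2 - 1)]

theorem monotone_psi : Monotone psi := by
  intro x y hxy
  unfold psi
  split_ifs with hx hy hy
  · exact le_rfl
  · linarith [Real.sqrt_nonneg (y ^ 2 - 1)]
  · exact absurd (hxy.trans hy) hx
  · gcongr
    nlinarith

theorem exists_add_eq_mul_eq_one_norm_le_psi (y : ℝ) :
    ∃ a b : ℂ, a + b = 2 * y ∧ a * b = 1 ∧ ‖a‖ ≤ psi |y| ∧ ‖b‖ ≤ psi |y| := by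
  by_cases hy : |y| ≤ 1
  · set s := Real.sqrt (1 - y ^ 2)
    have hs : s ^ 2 = 1 - y ^ 2 := Real.sq_sqrt (by nlinarith [sq_abs y, abs_nonneg y])
    have hnorm (s' : ℝ) (hs' : s' ^ 2 = s ^ 2) : ‖(y + s' * Complex.I : ℂ)‖ ≤ psi |y| := by
      rw [Complex.norm_add_mul_I, hs', hs, psi, if_pos hy]
      simp
    refine ⟨y + s * Complex.I, y + (-s) * Complex.I, by ring, ?_, hnorm s rfl,
      by simpa using hnorm (-s) (by ring)⟩
    have hs' : (s : ℂ) ^ 2 = 1 - (y : ℂ) ^ 2 := by exact_mod_cast hs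
    linear_combination hs' - (s : ℂ) ^ 2 * Complex.I_sq
  · rw [not_le] at hy
    set s := Real.sqrt (y ^ 2 - 1)
    have hs : s ^ 2 = y ^ 2 - 1 := Real.sq_sqrt (by nlinarith [sq_abs y, abs_nonneg y])
    have hψ : psi |y| = |y| + s := by rw [psi, if_neg (not_le.2 hy), sq_abs]
    refine ⟨(y + s : ℝ), (y - s : ℝ), by push_cast; ring, ?_, ?_, ?_⟩
    · have : ((y + s) * (y - s) : ℝ) = 1 := by linear_combination -hs
      exact_mod_cast this
    · rw [Complex.norm_real, Real.norm_eq_abs, hψ]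
      exact (abs_add_le _ _).trans (by rw [abs_of_nonneg (Real.sqrt_nonneg _)])
    · rw [Complex.norm_real, Real.norm_eq_abs, hψ]
      exact (abs_sub _ _).trans (by rw [abs_of_nonneg (Real.sqrt_nonneg _)])

theorem abs_eval_nbPoly_le {k : ℝ} (hk : 1 < k) {x lam : ℝ} (hx : |x| ≤ lam) (m : ℕ) :
    |(nbPoly k (m + 2)).eval x| ≤
      (m + 3) * (√(k - 1) * psi (lam / (2 * √(k - 1)))) ^ (m + 2) +
        (m + 1) * (√(k - 1) * psi (lam / (2 * √(k - 1)))) ^ m := by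
  set r := √(k - 1)
  have hr : 0 < r := Real.sqrt_pos.2 (by linarith)
  have hr2 : r ^ 2 = k - 1 := Real.sq_sqrt (by linarith)
  obtain ⟨a, b, hadd, hmul, ha, hb⟩ := exists_add_eq_mul_eq_one_norm_le_psi (x / (2 * r))
  have hψ : psi |x / (2 * r)| ≤ psi (lam / (2 * r)) := by
    apply monotone_psi
    rw [abs_div, abs_of_pos (by positivity : 0 < 2 * r)]
    gcongr
  have hscale {c : ℂ} (hc : ‖c‖ ≤ psi |x / (2 * r)|) : ‖(r : ℂ) * c‖ ≤ r * psi (lam / (2 * r)) := by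
    rw [norm_mul, Complex.norm_real, Real.norm_of_nonneg hr.le]
    gcongr
    exact hc.trans hψ
  have hadd' : (r : ℂ) * a + r * b = x := by
    have hr' : (r : ℂ) ≠ 0 := by exact_mod_cast hr.ne'
    rw [← mul_add, hadd]
    push_cast
    field_simp
  have hmul' : (r : ℂ) * a * (r * b) = k - 1 := by
    rw [mul_mul_mul_comm, hmul, mul_one, ← sq]
    exact_mod_cast hr2
  calc |(nbPoly k (m + 2)).eval x| = ‖(((nbPoly k (m + 2)).eval x : ℝ) : ℂ)‖ := by
        rw [Complex.norm_real, Real.norm_eq_abs]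
    _ = ‖completeHom (r * a) (r * b) (m + 2) - completeHom (r * a) (r * b) m‖ := by
        rw [eval_nbPoly_eq_completeHom k x hadd' hmul' m]
    _ ≤ ‖completeHom (r * a) (r * b) (m + 2)‖ + ‖completeHom (r * a) (r * b) m‖ := norm_sub_le _ _
    _ ≤ ((m + 2 : ℕ) + 1) * (r * psi (lam / (2 * r))) ^ (m + 2) +
          (m + 1) * (r * psi (lam / (2 * r))) ^ m :=
        add_le_add (norm_completeHom_le (hscale ha) (hscale hb) _)
          (norm_completeHom_le (hscale ha) (hscale hb) _)
    _ = _ := by push_cast; ring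

theorem psi_div_sqrt_lt_one {k lam : ℝ} (hk : 2 < k) (hlam : lam < k) :
    psi (lam / (2 * √(k - 1))) / √(k - 1) < 1 := by
  set r := √(k - 1)
  have hr2 : r ^ 2 = k - 1 := Real.sq_sqrt (by linarith)
  have hr1 : 1 < r := Real.lt_sqrt (by norm_num) |>.2 (by linarith)
  rw [div_lt_one (by linarith)]
  unfold psi
  split_ifs with hx
  · exact hr1
  · set x := lam / (2 * r)
    have hlam' : 2 * r * x < r ^ 2 + 1 := by
      have hr0 : r ≠ 0 := by positivity
      rw [hr2, show 2 * r * x = lam by simp only [x]; field_simp]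
      linarith
    have hxr : x < r := by nlinarith
    have hsqrt : √(x ^ 2 - 1) < r - x := (Real.sqrt_lt' (by linarith)).2 (by nlinarith)
    linarith

theorem abs_nbWalkCount_sub_le {V : Type} [Fintype V] [DecidableEq V] {G : SimpleGraph V}
    {k : ℕ} (hk : 2 ≤ k) (hreg : kRegular G k) (hA : (adjMat G).IsHermitian) {lam : ℝ}
    (hlamk : lam < k) {i₀ : V} (hi₀ : hA.eigenvalues i₀ = k)
    (hbound : ∀ i, i ≠ i₀ → |hA.eigenvalues i| ≤ lam) (m : ℕ) (u v : V) :
    |(nbWalkCount G (m + 2) u v : ℝ) - k * (k - 1) ^ (m + 1) / Fintype.card V| ≤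
      (m + 3) * (√((k : ℝ) - 1) * psi (lam / (2 * √((k : ℝ) - 1)))) ^ (m + 2) +
        (m + 1) * (√((k : ℝ) - 1) * psi (lam / (2 * √((k : ℝ) - 1)))) ^ m := by
  classical
  have hk1 : (1 : ℝ) < k := by exact_mod_cast hk
  have hΨ := one_le_psi (lam / (2 * √((k : ℝ) - 1)))
  have hwalk : (nbWalkCount G (m + 2) u v : ℝ) = aeval (adjMat G) (nbPoly k (m + 2)) u v := by
    rw [adjMat_eq_adjMatrix, ← nbWalkMatrix_eq_aeval hreg.isRegularOfDegree (m + 1)]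
    rfl
  rw [hwalk, ← eval_nbPoly_self k (m + 1)]
  exact hA.abs_aeval_apply_sub_eval_div_card_le (sum_adjMat_apply hreg)
    (fun i hi h => by linarith [le_abs_self (hA.eigenvalues i), hbound i hi]) hi₀ _
    (by positivity) (fun i hi => abs_eval_nbPoly_le hk1 (hbound i hi) m) u v

end NonBacktracking

open NonBacktracking

/-- **Uniform estimate on the non-backtracking transition probabilities (Appendix,
proof of Lemma 7.2).**  Let `G` be a `k`-regular graph on `n` vertices whose adjacency
matrix has all non-principal eigenvalues bounded in absolute value by `λ̃ < k`.  With
`P̃^{(t)}_{u,v} = A^{(t)}_{u,v} / (k (k−1)^{t−1})` (where `A^{(t)}_{u,v}` counts the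
non-backtracking walks of length `t` from `u` to `v`) and
`β = ψ(λ̃ / (2√(k−1))) / √(k−1)`, we have `β < 1` and for every `t ≥ 2` and vertices
`u, v`:
`|P̃^{(t)}_{u,v} − 1/n| ≤ ((k−1)/k)(t+1) β^t + (1/(k(k−1)))(t−1) β^{t−2}`. -/
theorem nb_transition_uniform_estimate {V : Type} [Fintype V] [DecidableEq V]
    (G : SimpleGraph V) (k : ℕ) (hk : 3 ≤ k) (hreg : kRegular G k)
    (hA : (adjMat G).IsHermitian) (lam : ℝ) (hlamk : lam < k)
    (i₀ : V) (hi₀ : hA.eigenvalues i₀ = k)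
    (hbound : ∀ i, i ≠ i₀ → |hA.eigenvalues i| ≤ lam) :
    psi (lam / (2 * Real.sqrt ((k : ℝ) - 1))) / Real.sqrt ((k : ℝ) - 1) < 1 ∧
    ∀ t, 2 ≤ t → ∀ u v : V,
      |(nbWalkCount G t u v : ℝ) / ((k : ℝ) * ((k : ℝ) - 1) ^ (t - 1)) -
          1 / (Fintype.card V : ℝ)| ≤
        (((k : ℝ) - 1) / k) * ((t : ℝ) + 1) *
            (psi (lam / (2 * Real.sqrt ((k : ℝ) - 1))) / Real.sqrt ((k : ℝ) - 1)) ^ t +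
          (1 / ((k : ℝ) * ((k : ℝ) - 1))) * ((t : ℝ) - 1) *
            (psi (lam / (2 * Real.sqrt ((k : ℝ) - 1))) / Real.sqrt ((k : ℝ) - 1)) ^ (t - 2) := by
  have hk2 : (2 : ℝ) < k := by exact_mod_cast hk
  refine ⟨psi_div_sqrt_lt_one hk2 hlamk, fun t ht u v => ?_⟩
  obtain ⟨m, rfl⟩ : ∃ m, t = m + 2 := ⟨t - 2, by omega⟩
  have hcount := abs_nbWalkCount_sub_le (by omega) hreg hA hlamk hi₀ hbound m u v
  set r := √((k : ℝ) - 1)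
  have hr2 : r ^ 2 = k - 1 := Real.sq_sqrt (by linarith)
  have hr : 0 < r := Real.sqrt_pos.2 (by linarith)
  have hd : (0 : ℝ) < k * (k - 1) ^ (m + 1) := mul_pos (by linarith) (pow_pos (by linarith) _)
  rw [show m + 2 - 1 = m + 1 by omega, show m + 2 - 2 = m by omega]
  calc |(nbWalkCount G (m + 2) u v : ℝ) / (k * (k - 1) ^ (m + 1)) - 1 / Fintype.card V|
      = |(nbWalkCount G (m + 2) u v : ℝ) - k * (k - 1) ^ (m + 1) / Fintype.card V| /
          (k * (k - 1) ^ (m + 1)) := by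
        rw [← abs_of_pos hd, ← abs_div, abs_of_pos hd, sub_div, div_div_cancel_left' hd.ne',
          one_div]
    _ ≤ _ := div_le_div_of_nonneg_right hcount hd.le
    _ = _ := by
        rw [div_pow, div_pow, ← hr2]
        field_simp
        push_cast
        ring
end
end
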